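/- arXiv:2602.01497 — 3 statements merged into one kernel-verified Lean document; each statement's English description precedes it below -/
import Mathlib

section
/- Let σ(z) = tanh(z/√2), let Q : (−1,1) → ℝ be continuously differentiable with Q(0) = 0, and set Q₁(u) = (3/2)(u − u³/3). Define Φ₁(z) = (4/3)·σ'(z)·∫₀^{σ(z)} (Q(u) − Q₁(u))/(1 − u²)³ du. Then Φ₁(0) = 0 and Φ₁ solves Φ₁''(z) − (3σ(z)² − 1)·Φ₁(z) = (√2/3)·Q'(σ(z)) − σ'(z) for all real z. -/
/-!
Write `Φ₁ = σ' · v` with `v(z) = (4/3) ∫₀^{σ(z)} g` and `g(u) = (Q(u) − Q₁(u))/(1 − u²)³`.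
Differentiating `σ' = (1 − σ²)/√2` twice gives `σ''' = (3σ² − 1) σ'`, so `σ'` lies in the kernel of
`L = d²/dz² − (3σ² − 1)`, and reduction of order gives `L(σ' v) = (σ'² v')' / σ'`. Since
`σ'³ = (1 − σ²)³ / (2√2)`, the weight of `g` cancels and `σ'² v' = (√2/3)(Q(σ) − Q₁(σ))`, whose
derivative divided by `σ'` is `(√2/3)(Q'(σ) − Q₁'(σ)) = (√2/3) Q'(σ) − σ'`.
-/

open intervalIntegral

/-- The heteroclinic profile `σ(z) = tanh(z/√2)`. -/
noncomputable def sigma (z : ℝ) : ℝ := Real.tanh (z / Real.sqrt 2)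

/-- The NMN reference kernel `Q₁(u) = (3/2)(u − u³/3)`. -/
noncomputable def Q₁ (u : ℝ) : ℝ := (3 / 2) * (u - u ^ 3 / 3)

open Set

theorem Real.hasDerivAt_tanh (x : ℝ) : HasDerivAt Real.tanh (1 - Real.tanh x ^ 2) x := by
  have htanh : Real.tanh = fun y => Real.sinh y / Real.cosh y :=
    funext Real.tanh_eq_sinh_div_cosh
  have hcosh := (Real.cosh_pos x).ne'
  rw [htanh]
  refine ((Real.hasDerivAt_sinh x).div (Real.hasDerivAt_cosh x) hcosh).congr_deriv ?_
  field_simp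

theorem hasDerivAt_integral_of_continuousOn_Ioo {E : Type*} [NormedAddCommGroup E]
    [NormedSpace ℝ E] [CompleteSpace E] {f : ℝ → E} {a b c x : ℝ}
    (hf : ContinuousOn f (Ioo a b)) (hc : c ∈ Ioo a b) (hx : x ∈ Ioo a b) :
    HasDerivAt (fun t => ∫ u in c..t, f u) (f x) x :=
  integral_hasDerivAt_right ((hf.mono (ordConnected_Ioo.uIcc_subset hc hx)).intervalIntegrable)
    (hf.stronglyMeasurableAtFilter isOpen_Ioo x hx) (hf.continuousAt (isOpen_Ioo.mem_nhds hx))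

theorem deriv_deriv_mul_sub_eq_div {p V v v' : ℝ → ℝ} {z F : ℝ}
    (hp : Differentiable ℝ p) (hp' : HasDerivAt (deriv p) (V z * p z) z)
    (hv : ∀ x, HasDerivAt v (v' x) x) (hp0 : ∀ x, p x ≠ 0)
    (hF : HasDerivAt (fun x => p x ^ 2 * v' x) F z) :
    deriv (deriv fun x => p x * v x) z - V z * (p z * v z) = F / p z := by
  have hderiv : deriv (fun x => p x * v x) = fun x => deriv p x * v x + p x * v' x :=
    funext fun x => ((hp x).hasDerivAt.mul (hv x)).deriv
  have hv' := (hF.div ((hp z).hasDerivAt.pow 2) (pow_ne_zero 2 (hp0 z))).congr_of_eventuallyEq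
    (Filter.Eventually.of_forall fun x => by simp [field, hp0 x] : v' =ᶠ[nhds z] _)
  have hderiv' : HasDerivAt (fun x => deriv p x * v x + p x * v' x)
      (V z * p z * v z + deriv p z * v' z + (deriv p z * v' z + p z *
        ((F * p z ^ 2 - p z ^ 2 * v' z * (2 * p z ^ (2 - 1) * deriv p z)) / (p z ^ 2) ^ 2))) z :=
    (hp'.mul (hv z)).add ((hp z).hasDerivAt.mul hv')
  rw [hderiv, hderiv'.deriv]
  field_simp [hp0 z]
  ring

theorem sigma_mem_Ioo (z : ℝ) : sigma z ∈ Ioo (-1) 1 :=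
  ⟨Real.neg_one_lt_tanh _, Real.tanh_lt_one _⟩

theorem hasDerivAt_sigma (z : ℝ) : HasDerivAt sigma ((1 - sigma z ^ 2) / √2) z := by
  have hlin : HasDerivAt (fun z : ℝ => z / √2) (1 / √2) z := (hasDerivAt_id z).div_const _
  refine ((Real.hasDerivAt_tanh _).comp z hlin).congr_deriv ?_
  rw [sigma]
  ring

theorem deriv_sigma : deriv sigma = fun z => (1 - sigma z ^ 2) / √2 :=
  funext fun z => (hasDerivAt_sigma z).deriv

theorem deriv_sigma_pos (z : ℝ) : 0 < deriv sigma z := by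
  obtain ⟨hlo, hhi⟩ := sigma_mem_Ioo z
  rw [deriv_sigma]
  exact div_pos (by nlinarith) (by positivity)

theorem hasDerivAt_deriv_sigma (z : ℝ) :
    HasDerivAt (deriv sigma) (-(√2 * sigma z * deriv sigma z)) z := by
  rw [deriv_sigma]
  refine ((((hasDerivAt_sigma z).pow 2).const_sub 1).div_const √2).congr_deriv ?_
  field_simp
  rw [Real.sq_sqrt zero_le_two]
  ring

theorem hasDerivAt_deriv_deriv_sigma (z : ℝ) :
    HasDerivAt (deriv (deriv sigma)) ((3 * sigma z ^ 2 - 1) * deriv sigma z) z := by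
  have hderiv : deriv (deriv sigma) = fun z => -(√2 * (sigma z * deriv sigma z)) :=
    funext fun z => (hasDerivAt_deriv_sigma z).deriv.trans (by ring)
  rw [hderiv]
  refine (((hasDerivAt_sigma z).mul (hasDerivAt_deriv_sigma z)).const_mul √2).neg.congr_deriv ?_
  rw [deriv_sigma]
  field_simp
  rw [Real.sq_sqrt zero_le_two]
  ring

theorem hasDerivAt_Q₁ (u : ℝ) : HasDerivAt Q₁ (3 / 2 * (1 - u ^ 2)) u := by
  have hQ₁ : Q₁ = fun u => 3 / 2 * (id u - u ^ 3 / 3) := rfl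
  rw [hQ₁]
  refine (((hasDerivAt_id u).sub ((hasDerivAt_pow 3 u).div_const 3)).const_mul _).congr_deriv ?_
  ring

theorem deriv_sigma_sq_mul_integrand (q : ℝ → ℝ) (z : ℝ) :
    deriv sigma z ^ 2 * (4 / 3 * (q (sigma z) / (1 - sigma z ^ 2) ^ 3 * deriv sigma z))
      = √2 / 3 * q (sigma z) := by
  obtain ⟨hlo, hhi⟩ := sigma_mem_Ioo z
  have hden : 1 - sigma z ^ 2 ≠ 0 := by nlinarith
  rw [deriv_sigma]
  field_simp
  rw [show √2 ^ 4 = (√2 ^ 2) ^ 2 by ring, Real.sq_sqrt zero_le_two]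
  ring

theorem reduced_Phi1_solves_first_order_inner_problem_general
    (Q : ℝ → ℝ) (hQ : ContDiffOn ℝ 1 Q (Set.Ioo (-1) 1))
    (Φ₁ : ℝ → ℝ)
    (hΦ₁ : ∀ z : ℝ, Φ₁ z =
      (4 / 3) * deriv sigma z *
        ∫ u in (0:ℝ)..(sigma z), (Q u - Q₁ u) / (1 - u ^ 2) ^ 3) :
    Φ₁ 0 = 0 ∧
    ∀ z : ℝ, deriv (deriv Φ₁) z - (3 * (sigma z) ^ 2 - 1) * Φ₁ z
      = (Real.sqrt 2 / 3) * deriv Q (sigma z) - deriv sigma z := by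
  refine ⟨by simp [hΦ₁, sigma], fun z => ?_⟩
  set g : ℝ → ℝ := fun u => (Q u - Q₁ u) / (1 - u ^ 2) ^ 3
  have hg : ContinuousOn g (Ioo (-1) 1) :=
    (hQ.continuousOn.sub (by unfold Q₁; fun_prop)).div (by fun_prop)
      fun u ⟨hlo, hhi⟩ => pow_ne_zero 3 (by nlinarith)
  have hv (x : ℝ) : HasDerivAt (fun x => 4 / 3 * ∫ u in (0:ℝ)..sigma x, g u)
      (4 / 3 * (g (sigma x) * deriv sigma x)) x :=
    (((hasDerivAt_integral_of_continuousOn_Ioo hg (by norm_num) (sigma_mem_Ioo x)).comp x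
      (hasDerivAt_sigma x)).congr_deriv (by rw [deriv_sigma])).const_mul _
  have hQσ : HasDerivAt Q (deriv Q (sigma z)) (sigma z) :=
    ((hQ.contDiffAt (isOpen_Ioo.mem_nhds (sigma_mem_Ioo z))).differentiableAt
      one_ne_zero).hasDerivAt
  have hF : HasDerivAt (fun x => deriv sigma x ^ 2 * (4 / 3 * (g (sigma x) * deriv sigma x)))
      (√2 / 3 * ((deriv Q (sigma z) - 3 / 2 * (1 - sigma z ^ 2)) * deriv sigma z)) z := by
    simp only [g, deriv_sigma_sq_mul_integrand fun u => Q u - Q₁ u]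
    exact (((hQσ.sub (hasDerivAt_Q₁ _)).comp z (hasDerivAt_sigma z)).congr_deriv
      (by rw [deriv_sigma])).const_mul _
  have hΦ : Φ₁ = fun x => deriv sigma x * (4 / 3 * ∫ u in (0:ℝ)..sigma x, g u) :=
    funext fun x => by rw [hΦ₁]; ring
  rw [hΦ]
  rw [deriv_deriv_mul_sub_eq_div (V := fun x => 3 * sigma x ^ 2 - 1)
    (fun x => (hasDerivAt_deriv_sigma x).differentiableAt) (hasDerivAt_deriv_deriv_sigma z) hv
    (fun x => (deriv_sigma_pos x).ne') hF, mul_div_assoc, mul_div_cancel_right₀ _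
    (deriv_sigma_pos z).ne', deriv_sigma]
  field_simp
  rw [Real.sq_sqrt zero_le_two]
  ring

/-- Reduced single-quadrature formula: for `Q` continuously differentiable on `(−1,1)`
with `Q(0) = 0`, the function
`Φ₁(z) = (4/3)·σ'(z)·∫₀^{σ(z)} (Q(u) − Q₁(u))/(1 − u²)³ du` satisfies `Φ₁(0) = 0` and
solves `Φ₁'' − (3σ² − 1)Φ₁ = (√2/3)Q'(σ) − σ'`. -/
theorem reduced_Phi1_solves_first_order_inner_problem
    (Q : ℝ → ℝ) (hQ : ContDiffOn ℝ 1 Q (Set.Ioo (-1) 1)) (hQ0 : Q 0 = 0)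
    (Φ₁ : ℝ → ℝ)
    (hΦ₁ : ∀ z : ℝ, Φ₁ z =
      (4 / 3) * deriv sigma z *
        ∫ u in (0:ℝ)..(sigma z), (Q u - Q₁ u) / (1 - u ^ 2) ^ 3) :
    Φ₁ 0 = 0 ∧
    ∀ z : ℝ, deriv (deriv Φ₁) z - (3 * (sigma z) ^ 2 - 1) * Φ₁ z
      = (Real.sqrt 2 / 3) * deriv Q (sigma z) - deriv sigma z :=
  reduced_Phi1_solves_first_order_inner_problem_general Q hQ Φ₁ hΦ₁
end

section
/- For every natural number k ≥ 0, ∫₀^∞ x² · (1/cosh x)^{2k+2} dx = (2^{2k−1}·(k!)²/(2k+1)!) · (π²/6 − Σ_{j=1}^{k} 1/j²), with the convention that the empty sum (k = 0) equals 0; in particular ∫₀^∞ x²·(1/cosh x)² dx = π²/12. -/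
/-!
With `M(p, m) = ∫₀^∞ xᵖ sechᵐ x dx`, integrating `xᵖ` against
`(sinh · sech^{m+1})' = (m+1) sech^{m+2} - m sechᵐ` by parts gives
`(m+1) M(p, m+2) = m M(p, m) - p ∫ xᵖ⁻¹ sinh sech^{m+1}`, and integrating by parts once more
against `(sechᵐ)' = -m sinh sech^{m+1}` turns the last integral for `p = 2` into `M(0, m)/m`.
Everything thus reduces to `M(0, 2) = 1` and `M(2, 2) = π²/12`. For the latter, expand
`sech² x = Σₙ (-1)ⁿ⁺¹ 4n e^{-2nx}` and integrate termwise: this gives the alternating series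
`Σ (-1)ⁿ⁺¹/n² = ζ(2)/2`.
-/

open MeasureTheory Set Filter Real Topology

noncomputable def sech (x : ℝ) : ℝ := (cosh x)⁻¹

lemma sech_pos (x : ℝ) : 0 < sech x := inv_pos.2 (cosh_pos x)

lemma sech_le_one (x : ℝ) : sech x ≤ 1 := inv_le_one_of_one_le₀ (one_le_cosh x)

lemma sech_le_two_mul_exp_neg (x : ℝ) : sech x ≤ 2 * exp (-x) := by
  rw [sech, exp_neg, ← div_eq_mul_inv, ← inv_div, inv_le_inv₀ (cosh_pos x) (by positivity),
    cosh_eq]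
  linarith [exp_pos (-x)]

@[fun_prop]
lemma continuous_sech : Continuous sech :=
  continuous_cosh.inv₀ fun x => (cosh_pos x).ne'

lemma cosh_mul_sech (x : ℝ) : cosh x * sech x = 1 := mul_inv_cancel₀ (cosh_pos x).ne'

lemma sinh_mul_sech (x : ℝ) : sinh x * sech x = tanh x := by
  rw [sech, tanh_eq_sinh_div_cosh, div_eq_mul_inv]

lemma sinh_sq_mul_sech_sq (x : ℝ) : sinh x ^ 2 * sech x ^ 2 = 1 - sech x ^ 2 := by
  have := cosh_sq_sub_sinh_sq x
  have := (cosh_pos x).ne'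
  rw [sech]
  field_simp
  linarith

lemma tendsto_tanh_atTop : Tendsto tanh atTop (𝓝 1) := by
  have h : ∀ x, tanh x = 1 - exp (-x) * sech x := fun x => by
    rw [← sinh_mul_sech, sech, sinh_eq, cosh_eq]
    field_simp
    ring
  have h0 : Tendsto (fun x => exp (-x) * sech x) atTop (𝓝 0) :=
    squeeze_zero (fun x => (mul_pos (exp_pos _) (sech_pos x)).le)
      (fun x => mul_le_of_le_one_right (exp_pos _).le (sech_le_one x))
      tendsto_exp_neg_atTop_nhds_zero
  have := (tendsto_const_nhds (x := (1:ℝ))).sub h0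
  rw [sub_zero] at this
  exact this.congr fun x => (h x).symm

lemma hasDerivAt_sech (x : ℝ) : HasDerivAt sech (-(sinh x * sech x ^ 2)) x := by
  refine ((hasDerivAt_cosh x).inv (cosh_pos x).ne').congr_deriv ?_
  unfold sech
  ring

lemma hasDerivAt_sech_pow (m : ℕ) (x : ℝ) :
    HasDerivAt (fun y => sech y ^ m) (-(m * sinh x * sech x ^ (m + 1))) x := by
  refine ((hasDerivAt_sech x).pow m).congr_deriv ?_
  rcases m with _ | m
  · simp
  · simp only [Nat.add_sub_cancel]
    ring

lemma hasDerivAt_sinh_mul_sech_pow_succ (m : ℕ) (x : ℝ) :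
    HasDerivAt (fun y => sinh y * sech y ^ (m + 1))
      ((m + 1) * sech x ^ (m + 2) - m * sech x ^ m) x := by
  refine ((hasDerivAt_sinh x).mul (hasDerivAt_sech_pow (m + 1) x)).congr_deriv ?_
  push_cast
  linear_combination (-((m : ℝ) + 1) * sech x ^ m) * sinh_sq_mul_sech_sq x
    + sech x ^ m * cosh_mul_sech x

lemma integrableOn_pow_mul_exp_neg_mul (n : ℕ) {r : ℝ} (hr : 0 < r) :
    IntegrableOn (fun x => x ^ n * exp (-(r * x))) (Ioi 0) := by
  have h := integrableOn_rpow_mul_exp_neg_mul_rpow (s := n) (p := 1)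
    (by linarith [n.cast_nonneg (α := ℝ)]) one_pos hr
  refine h.congr_fun (fun x _ => ?_) measurableSet_Ioi
  simp [rpow_natCast]

lemma integral_pow_mul_exp_neg_mul (n : ℕ) {r : ℝ} (hr : 0 < r) :
    ∫ x in Ioi (0:ℝ), x ^ n * exp (-(r * x)) = n.factorial / r ^ (n + 1) := by
  have h := integral_rpow_mul_exp_neg_mul_Ioi (a := n + 1) (by positivity) hr
  simp only [add_sub_cancel_right, rpow_natCast, Gamma_nat_eq_factorial] at h
  rw [h, ← rpow_natCast, Nat.cast_add, Nat.cast_one, one_div, inv_rpow hr.le]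
  ring

lemma pow_mul_sech_pow_le (p : ℕ) {m : ℕ} (hm : m ≠ 0) {x : ℝ} (hx : 0 ≤ x) :
    x ^ p * sech x ^ m ≤ 2 * (x ^ p * exp (-x)) := by
  calc x ^ p * sech x ^ m ≤ x ^ p * (2 * exp (-x)) := by
        gcongr
        exact (pow_le_of_le_one (sech_pos x).le (sech_le_one x) hm).trans
          (sech_le_two_mul_exp_neg x)
    _ = 2 * (x ^ p * exp (-x)) := by ring

lemma pow_mul_sech_pow_nonneg (p m : ℕ) {x : ℝ} (hx : 0 ≤ x) : 0 ≤ x ^ p * sech x ^ m :=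
  mul_nonneg (pow_nonneg hx p) (pow_nonneg (sech_pos x).le m)

lemma integrableOn_pow_mul_sech_pow (p : ℕ) {m : ℕ} (hm : m ≠ 0) :
    IntegrableOn (fun x => x ^ p * sech x ^ m) (Ioi 0) := by
  refine Integrable.mono' (((integrableOn_pow_mul_exp_neg_mul p one_pos).const_mul 2))
    ((continuous_pow p).mul (continuous_sech.pow m)).aestronglyMeasurable ?_
  refine ae_restrict_of_forall_mem measurableSet_Ioi fun x hx => ?_
  rw [norm_of_nonneg (pow_mul_sech_pow_nonneg p m (le_of_lt hx)), one_mul]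
  exact pow_mul_sech_pow_le p hm (le_of_lt hx)

lemma tendsto_pow_mul_sech_pow_atTop (p : ℕ) {m : ℕ} (hm : m ≠ 0) :
    Tendsto (fun x => x ^ p * sech x ^ m) atTop (𝓝 0) := by
  refine squeeze_zero' ?_ ?_
    (by simpa using (tendsto_pow_mul_exp_neg_atTop_nhds_zero p).const_mul 2)
  · filter_upwards [eventually_ge_atTop 0] with x hx using pow_mul_sech_pow_nonneg p m hx
  · filter_upwards [eventually_ge_atTop 0] with x hx using pow_mul_sech_pow_le p hm hx

lemma sinh_mul_sech_pow_succ (x : ℝ) (m : ℕ) :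
    sinh x * sech x ^ (m + 1) = tanh x * sech x ^ m := by
  rw [← sinh_mul_sech, pow_succ]
  ring

lemma norm_pow_mul_sinh_mul_sech_pow_succ_le (p m : ℕ) {x : ℝ} (hx : 0 ≤ x) :
    ‖x ^ p * (sinh x * sech x ^ (m + 1))‖ ≤ x ^ p * sech x ^ m := by
  rw [sinh_mul_sech_pow_succ, norm_mul, norm_mul, norm_of_nonneg (pow_nonneg hx p),
    norm_of_nonneg (pow_nonneg (sech_pos x).le m)]
  gcongr
  exact mul_le_of_le_one_left (pow_nonneg (sech_pos x).le m) (abs_tanh_lt_one x).le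

lemma integrableOn_pow_mul_sinh_mul_sech_pow_succ (p : ℕ) {m : ℕ} (hm : m ≠ 0) :
    IntegrableOn (fun x => x ^ p * (sinh x * sech x ^ (m + 1))) (Ioi 0) :=
  (integrableOn_pow_mul_sech_pow p hm).mono' (by fun_prop)
    (ae_restrict_of_forall_mem measurableSet_Ioi fun x hx =>
      norm_pow_mul_sinh_mul_sech_pow_succ_le p m (le_of_lt hx))

lemma tendsto_pow_mul_sinh_mul_sech_pow_succ_atTop (p : ℕ) {m : ℕ} (hm : m ≠ 0) :
    Tendsto (fun x => x ^ p * (sinh x * sech x ^ (m + 1))) atTop (𝓝 0) :=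
  squeeze_zero_norm' (by
      filter_upwards [eventually_ge_atTop 0] with x hx
      using norm_pow_mul_sinh_mul_sech_pow_succ_le p m hx)
    (tendsto_pow_mul_sech_pow_atTop p hm)

noncomputable def sechMoment (p m : ℕ) : ℝ := ∫ x in Ioi (0:ℝ), x ^ p * sech x ^ m

lemma sechMoment_add_two (p : ℕ) {m : ℕ} (hm : m ≠ 0) :
    (m + 1) * sechMoment p (m + 2) =
      m * sechMoment p m - p * ∫ x in Ioi (0:ℝ), x ^ (p - 1) * (sinh x * sech x ^ (m + 1)) := by
  have hv := integrableOn_pow_mul_sech_pow p (m := m + 2) (by omega)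
  have hw := integrableOn_pow_mul_sech_pow p hm
  have huv' : IntegrableOn
      (fun x => x ^ p * ((m + 1) * sech x ^ (m + 2) - m * sech x ^ m)) (Ioi 0) := by
    refine IntegrableOn.congr_fun ((hv.const_mul (m + 1)).sub (hw.const_mul m))
      (fun x _ => ?_) measurableSet_Ioi
    simp only [Pi.sub_apply]
    ring
  have hu'v : IntegrableOn
      (fun x => p * x ^ (p - 1) * (sinh x * sech x ^ (m + 1))) (Ioi 0) := by
    refine IntegrableOn.congr_fun
      ((integrableOn_pow_mul_sinh_mul_sech_pow_succ (p - 1) hm).const_mul p)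
      (fun x _ => ?_) measurableSet_Ioi
    ring
  have hzero : Tendsto (fun x => x ^ p * (sinh x * sech x ^ (m + 1))) (𝓝[>] 0) (𝓝 0) := by
    have hcont : Continuous fun x => x ^ p * (sinh x * sech x ^ (m + 1)) := by fun_prop
    simpa using (hcont.tendsto 0).mono_left nhdsWithin_le_nhds
  have ibp := integral_Ioi_mul_deriv_eq_deriv_mul
    (fun x _ => hasDerivAt_pow p x) (fun x _ => hasDerivAt_sinh_mul_sech_pow_succ m x)
    huv' hu'v hzero (tendsto_pow_mul_sinh_mul_sech_pow_succ_atTop p hm)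
  have lhs : ∫ x in Ioi (0:ℝ), x ^ p * ((m + 1) * sech x ^ (m + 2) - m * sech x ^ m) =
      (m + 1) * sechMoment p (m + 2) - m * sechMoment p m := by
    rw [sechMoment, sechMoment, ← integral_const_mul, ← integral_const_mul,
      ← integral_sub (hv.const_mul _) (hw.const_mul _)]
    congr 1 with x
    ring
  have rhs : ∫ x in Ioi (0:ℝ), p * x ^ (p - 1) * (sinh x * sech x ^ (m + 1)) =
      p * ∫ x in Ioi (0:ℝ), x ^ (p - 1) * (sinh x * sech x ^ (m + 1)) := by
    rw [← integral_const_mul]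
    congr 1 with x
    ring
  rw [lhs, rhs] at ibp
  linarith

lemma integral_pow_succ_mul_sinh_mul_sech_pow_succ (q : ℕ) {m : ℕ} (hm : m ≠ 0) :
    m * ∫ x in Ioi (0:ℝ), x ^ (q + 1) * (sinh x * sech x ^ (m + 1)) =
      (q + 1) * sechMoment q m := by
  have hv := integrableOn_pow_mul_sinh_mul_sech_pow_succ (q + 1) hm
  have hw := integrableOn_pow_mul_sech_pow q hm
  have huv' : IntegrableOn (fun x => x ^ (q + 1) * -(m * sinh x * sech x ^ (m + 1))) (Ioi 0) := by
    refine IntegrableOn.congr_fun (hv.const_mul m).neg (fun x _ => ?_) measurableSet_Ioi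
    simp only [Pi.neg_apply]
    ring
  have hu'v :
      IntegrableOn (fun x => ((q + 1 : ℕ) : ℝ) * x ^ (q + 1 - 1) * sech x ^ m) (Ioi 0) := by
    refine IntegrableOn.congr_fun (hw.const_mul (q + 1)) (fun x _ => ?_) measurableSet_Ioi
    push_cast
    ring
  have hzero : Tendsto (fun x => x ^ (q + 1) * sech x ^ m) (𝓝[>] 0) (𝓝 0) := by
    have hcont : Continuous fun x => x ^ (q + 1) * sech x ^ m := by fun_prop
    simpa using (hcont.tendsto 0).mono_left nhdsWithin_le_nhds
  have ibp := integral_Ioi_mul_deriv_eq_deriv_mul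
    (fun x _ => hasDerivAt_pow (q + 1) x) (fun x _ => hasDerivAt_sech_pow m x)
    huv' hu'v hzero (tendsto_pow_mul_sech_pow_atTop (q + 1) hm)
  have lhs : ∫ x in Ioi (0:ℝ), x ^ (q + 1) * -(m * sinh x * sech x ^ (m + 1)) =
      -(m * ∫ x in Ioi (0:ℝ), x ^ (q + 1) * (sinh x * sech x ^ (m + 1))) := by
    rw [← integral_const_mul, ← integral_neg]
    congr 1 with x
    ring
  have rhs : ∫ x in Ioi (0:ℝ), ((q + 1 : ℕ) : ℝ) * x ^ (q + 1 - 1) * sech x ^ m =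
      (q + 1) * sechMoment q m := by
    rw [sechMoment, ← integral_const_mul]
    congr 1 with x
    push_cast
    ring
  rw [lhs, rhs] at ibp
  linarith

lemma sechMoment_zero_add_two {m : ℕ} (hm : m ≠ 0) :
    (m + 1) * sechMoment 0 (m + 2) = m * sechMoment 0 m := by
  simpa using sechMoment_add_two 0 hm

lemma sechMoment_add_two_add_two (q : ℕ) {m : ℕ} (hm : m ≠ 0) :
    m * (m + 1) * sechMoment (q + 2) (m + 2) =
      m ^ 2 * sechMoment (q + 2) m - (q + 2) * (q + 1) * sechMoment q m := by
  have h := sechMoment_add_two (q + 2) hm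
  have h' := integral_pow_succ_mul_sinh_mul_sech_pow_succ q hm
  push_cast at h
  linear_combination (m : ℝ) * h - (q + 2) * h'

lemma sechMoment_zero_two : sechMoment 0 2 = 1 := by
  have h := integral_Ioi_of_hasDerivAt_of_tendsto' (a := 0) (f := fun x => sinh x * sech x)
    (fun x _ => by simpa using hasDerivAt_sinh_mul_sech_pow_succ 0 x)
    (by simpa using integrableOn_pow_mul_sech_pow 0 two_ne_zero)
    (by simpa [sinh_mul_sech] using tendsto_tanh_atTop)
  simpa [sechMoment] using h

lemma hasSum_sech_sq {x : ℝ} (hx : 0 < x) :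
    HasSum (fun n : ℕ => (-1) ^ (n + 1) * (4 * n * exp (-(2 * n * x)))) (sech x ^ 2) := by
  set r := -exp (-(2 * x))
  have hr : ‖r‖ < 1 := by
    rw [norm_neg, norm_of_nonneg (exp_pos _).le, exp_lt_one_iff]
    linarith
  have hterm : (fun n : ℕ => -4 * (n * r ^ n)) =
      fun n : ℕ => (-1) ^ (n + 1) * (4 * n * exp (-(2 * n * x))) := by
    ext n
    rw [neg_pow, ← exp_nat_mul]
    ring_nf
  have hsum : -4 * (r / (1 - r) ^ 2) = sech x ^ 2 := by
    have he : exp x = (exp (-x))⁻¹ := by rw [exp_neg, inv_inv]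
    have he2 : exp (-(2 * x)) = exp (-x) ^ 2 := by rw [← exp_nat_mul]; ring_nf
    have : 0 < exp (-x) := exp_pos _
    simp only [r, sech, cosh_eq, he, he2, sub_neg_eq_add]
    field_simp
    ring
  simpa only [hterm, hsum] using (hasSum_coe_mul_geometric_of_norm_lt_one hr).mul_left (-4)

lemma integral_sq_mul_exp_neg_two_mul (n : ℕ) :
    ∫ x in Ioi (0:ℝ), x ^ 2 * (4 * n * exp (-(2 * n * x))) = 1 / (n : ℝ) ^ 2 := by
  rcases n.eq_zero_or_pos with rfl | hn
  · simp
  calc ∫ x in Ioi (0:ℝ), x ^ 2 * (4 * n * exp (-(2 * n * x)))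
      = 4 * n * ∫ x in Ioi (0:ℝ), x ^ 2 * exp (-((2 * n) * x)) := by
        rw [← integral_const_mul]
        congr 1 with x
        ring
    _ = 1 / (n : ℝ) ^ 2 := by
        rw [integral_pow_mul_exp_neg_mul 2 (by positivity)]
        have : (n : ℝ) ≠ 0 := by positivity
        field_simp
        norm_num
        ring

lemma hasSum_neg_one_pow_succ_div_sq :
    HasSum (fun n : ℕ => (-1) ^ (n + 1) * (1 / (n : ℝ) ^ 2)) (π ^ 2 / 12) := by
  have heven : HasSum (fun n : ℕ => if Even n then 2 / (n : ℝ) ^ 2 else 0) (π ^ 2 / 12) := by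
    rw [← (mul_right_injective₀ two_ne_zero).hasSum_iff]
    · have hcomp : (fun n : ℕ => if Even n then 2 / (n : ℝ) ^ 2 else 0) ∘ (2 * ·) =
          fun m : ℕ => 1 / 2 * (1 / (m : ℝ) ^ 2) := by
        ext m
        simp only [Function.comp_apply, even_two_mul, if_true]
        push_cast
        ring
      rw [hcomp, show π ^ 2 / 12 = 1 / 2 * (π ^ 2 / 6) by ring]
      exact hasSum_zeta_two.mul_left (1 / 2)
    · rintro n hn
      rw [if_neg]
      rintro ⟨m, rfl⟩
      exact hn ⟨m, two_mul m⟩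
  have halt : (fun n : ℕ => 1 / (n : ℝ) ^ 2 - if Even n then 2 / (n : ℝ) ^ 2 else 0) =
      fun n : ℕ => (-1) ^ (n + 1) * (1 / (n : ℝ) ^ 2) := by
    ext n
    rcases Nat.even_or_odd n with h | h
    · rw [if_pos h, h.add_one.neg_one_pow]
      ring
    · rw [if_neg (Nat.not_even_iff_odd.2 h), h.add_one.neg_one_pow]
      ring
  rw [← halt, show π ^ 2 / 12 = π ^ 2 / 6 - π ^ 2 / 12 by ring]
  exact hasSum_zeta_two.sub heven

lemma sechMoment_two_two : sechMoment 2 2 = π ^ 2 / 12 := by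
  set F : ℕ → ℝ → ℝ := fun n x => (-1) ^ (n + 1) * (x ^ 2 * (4 * n * exp (-(2 * n * x))))
  have hF_int (n : ℕ) : IntegrableOn (F n) (Ioi 0) := by
    refine Integrable.const_mul ?_ _
    rcases n.eq_zero_or_pos with rfl | hn
    · simp
    · refine IntegrableOn.congr_fun
        ((integrableOn_pow_mul_exp_neg_mul 2 (r := 2 * n) (by positivity)).const_mul (4 * n))
        (fun x _ => ?_) measurableSet_Ioi
      ring
  have hF_norm (n : ℕ) : ∫ x in Ioi (0:ℝ), ‖F n x‖ = 1 / (n : ℝ) ^ 2 := by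
    rw [← integral_sq_mul_exp_neg_two_mul n]
    congr 1 with x
    rw [norm_mul, norm_pow, norm_neg, norm_one, one_pow, one_mul, norm_of_nonneg (by positivity)]
  have hF_sum :
      HasSum (fun n => ∫ x in Ioi (0:ℝ), F n x) (∫ x in Ioi (0:ℝ), ∑' n, F n x) :=
    hasSum_integral_of_summable_integral_norm hF_int
      (by simpa only [hF_norm] using Real.summable_one_div_nat_pow.2 one_lt_two)
  have hF_tsum : ∫ x in Ioi (0:ℝ), ∑' n, F n x = sechMoment 2 2 :=
    setIntegral_congr_fun measurableSet_Ioi fun x hx => by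
      simpa only [F, mul_left_comm] using ((hasSum_sech_sq hx).mul_left (x ^ 2)).tsum_eq
  have hF_term (n : ℕ) : ∫ x in Ioi (0:ℝ), F n x = (-1) ^ (n + 1) * (1 / (n : ℝ) ^ 2) := by
    rw [integral_const_mul, integral_sq_mul_exp_neg_two_mul]
  rw [hF_tsum, funext hF_term] at hF_sum
  exact hF_sum.unique hasSum_neg_one_pow_succ_div_sq

noncomputable def sechCoeff (k : ℕ) : ℝ :=
  4 ^ k * (k.factorial : ℝ) ^ 2 / (2 * k + 1).factorial

lemma sechCoeff_succ (k : ℕ) : (2 * k + 3) * sechCoeff (k + 1) = (2 * k + 2) * sechCoeff k := by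
  have h : (2 * (k + 1) + 1).factorial = (2 * k + 3) * ((2 * k + 2) * (2 * k + 1).factorial) := by
    rw [show 2 * (k + 1) + 1 = 2 * k + 1 + 1 + 1 by ring, Nat.factorial_succ, Nat.factorial_succ]
  simp only [sechCoeff, h, Nat.factorial_succ]
  push_cast
  field_simp
  ring

lemma sechMoment_zero_even (k : ℕ) : sechMoment 0 (2 * k + 2) = sechCoeff k := by
  induction k with
  | zero => simpa [sechCoeff] using sechMoment_zero_two
  | succ k ih =>
    have h := sechMoment_zero_add_two (m := 2 * k + 2) (by omega)
    rw [ih] at h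
    push_cast at h
    apply mul_left_cancel₀ (show (2 * k + 3 : ℝ) ≠ 0 by positivity)
    rw [sechCoeff_succ]
    linear_combination h

lemma sechMoment_two_even (k : ℕ) :
    sechMoment 2 (2 * k + 2) =
      sechCoeff k / 2 * (π ^ 2 / 6 - ∑ j ∈ Finset.Icc 1 k, 1 / (j : ℝ) ^ 2) := by
  induction k with
  | zero =>
    rw [sechMoment_two_two, sechCoeff]
    norm_num
    ring
  | succ k ih =>
    have h := sechMoment_add_two_add_two 0 (m := 2 * k + 2) (by omega)
    rw [ih, sechMoment_zero_even] at h
    push_cast at h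
    rw [Finset.sum_Icc_succ_top (by omega)]
    apply mul_left_cancel₀ (show ((2 * k + 2) * (2 * k + 3) : ℝ) ≠ 0 by positivity)
    rw [show 2 * (k + 1) + 2 = 2 * k + 2 + 2 by ring]
    push_cast
    linear_combination (norm := skip) h - (2 * k + 2) / 2 *
      (π ^ 2 / 6 - ∑ j ∈ Finset.Icc 1 k, 1 / (j : ℝ) ^ 2 - 1 / (k + 1) ^ 2) *
        sechCoeff_succ k
    field_simp
    ring

/-- Closed form of the sech moment: for every `k : ℕ`,
`∫₀^∞ x²·sech(x)^{2k+2} dx = 2^{2k−1}(k!)²/(2k+1)!·(π²/6 − Σ_{j=1}^k 1/j²)`;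
in particular `∫₀^∞ x²·sech(x)² dx = π²/12`. -/
theorem sech_moment_closed_form :
    (∀ k : ℕ,
      (∫ x in Set.Ioi (0:ℝ), x ^ 2 * (1 / Real.cosh x) ^ (2 * k + 2))
        = ((2:ℝ) ^ ((2 * (k:ℤ)) - 1) * (k.factorial : ℝ) ^ 2 / ((2 * k + 1).factorial : ℝ))
          * (Real.pi ^ 2 / 6 - ∑ j ∈ Finset.Icc 1 k, (1:ℝ) / (j:ℝ) ^ 2)) ∧
    (∫ x in Set.Ioi (0:ℝ), x ^ 2 * (1 / Real.cosh x) ^ 2) = Real.pi ^ 2 / 12 := by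
  have hmoment (m : ℕ) : ∫ x in Ioi (0:ℝ), x ^ 2 * (1 / cosh x) ^ m = sechMoment 2 m := by
    simp only [one_div]
    rfl
  refine ⟨fun k => ?_, by rw [hmoment, sechMoment_two_two]⟩
  have hpow : (2:ℝ) ^ (2 * (k:ℤ) - 1) = 4 ^ k / 2 := by
    rw [zpow_sub₀ two_ne_zero, zpow_one, zpow_mul]
    norm_num
  rw [hmoment, sechMoment_two_even, sechCoeff, hpow]
  ring
end

section
/- Let W_c, W_e : ℝ → ℝ be differentiable convex functions and set W = W_c − W_e. Then for all real a, b one has W(b) − W(a) ≤ (W_c'(b) − W_e'(a))·(b − a). -/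
lemma tangent_le_of_convex (f : ℝ → ℝ) (hf : Differentiable ℝ f)
    (hc : ConvexOn ℝ Set.univ f) (x y : ℝ) :
    deriv f x * (y - x) ≤ f y - f x := by
  rcases lt_trichotomy x y with h | h | h
  · have := hc.deriv_le_slope (Set.mem_univ x) (Set.mem_univ y) h (hf x)
    rw [slope_def_field, le_div_iff₀ (by linarith : 0 < y - x)] at this
    exact this
  · simp [h]
  · have := hc.slope_le_deriv (Set.mem_univ y) (Set.mem_univ x) h (hf x)
    rw [slope_def_field, div_le_iff₀ (by linarith : 0 < x - y)] at this
    nlinarith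

/-- Eyre convex-splitting inequality: if `W_c, W_e` are differentiable convex
functions and `W = W_c − W_e`, then for all `a, b`,
`W(b) − W(a) ≤ (W_c'(b) − W_e'(a))·(b − a)`. -/
theorem eyre_convex_splitting_inequality
    (Wc We : ℝ → ℝ)
    (hWc : Differentiable ℝ Wc) (hWe : Differentiable ℝ We)
    (hWcConv : ConvexOn ℝ Set.univ Wc) (hWeConv : ConvexOn ℝ Set.univ We)
    (a b : ℝ) :
    (Wc b - We b) - (Wc a - We a) ≤ (deriv Wc b - deriv We a) * (b - a) := by
  have h1 := tangent_le_of_convex Wc hWc hWcConv b a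
  have h2 := tangent_le_of_convex We hWe hWeConv a b
  nlinarith
end
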